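/- arXiv:2003.01561 — 3 statements merged into one kernel-verified Lean document; each statement's English description precedes it below -/
import Mathlib

section
/- Suppose A ⊆ ℤ^r is a finite set and its image A_1 under the first coordinate projection π_1 : ℤ^r → ℤ is ordered as A_1 = {a_{1,1} < ... < a_{1,n}}. Then ∫_{[0,1]^r} |∑_{a ∈ A} e(a·t)| dt ≥ C_MPS ∑_{j=1}^n (1/j) ∫_{[0,1]^{r-1}} |∑_{a* ∈ A_1*(a_{1,j})} e(a*·t)| dt, where C_MPS is the absolute constant from the McGehee–Pigno–Smith inequality. -/
/-!
Write `t = (x, y)` with `x` the first coordinate. Grouping `A` by first coordinates,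
`∑_{a ∈ A} e(a·t) = ∑_j u_j(y) e(a_{1,j} x)`, where `u_j` is the exponential sum over the `j`-th
fibre. For each fixed `y` the McGehee–Pigno–Smith inequality bounds the integral over `x` below by
`C ∑_j |u_j(y)| / j`; integrating this in `y` (Fubini) gives the theorem.
-/

open MeasureTheory

noncomputable def e (x : ℝ) : ℂ := Complex.exp (2 * Real.pi * Complex.I * x)

open Set

@[fun_prop]
theorem continuous_e : Continuous e := by
  unfold e; fun_prop

theorem e_add (x y : ℝ) : e (x + y) = e x * e y := by
  simp only [e, ← Complex.exp_add, Complex.ofReal_add]; ring_nf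

theorem setIntegral_Icc_fin_succ {E : Type*} [NormedAddCommGroup E] [NormedSpace ℝ E] {n : ℕ}
    {f : (Fin (n + 1) → ℝ) → E} {a b : Fin (n + 1) → ℝ} (hf : IntegrableOn f (Icc a b)) :
    ∫ t in Icc a b, f t =
      ∫ y in Icc (Fin.tail a) (Fin.tail b), ∫ x in Icc (a 0) (b 0), f (Fin.cons x y) := by
  set φ := (MeasurableEquiv.piFinSuccAbove (fun _ : Fin (n + 1) => ℝ) 0).symm
  have hφ : MeasurePreserving φ :=
    (volume_preserving_piFinSuccAbove (fun _ : Fin (n + 1) => ℝ) 0).symm _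
  have hφ_apply : ∀ p, φ p = Fin.cons p.1 p.2 := fun p => by
    simp [φ, MeasurableEquiv.piFinSuccAbove_symm_apply, Fin.insertNthEquiv, Fin.insertNth_zero']
  have hpre : φ ⁻¹' Icc a b = Icc (a 0) (b 0) ×ˢ Icc (Fin.tail a) (Fin.tail b) := by
    ext p
    simp only [mem_preimage, hφ_apply, mem_Icc, mem_prod, Fin.le_cons, Fin.cons_le]
    tauto
  have hint : IntegrableOn (f ∘ φ) (Icc (a 0) (b 0) ×ˢ Icc (Fin.tail a) (Fin.tail b)) := by
    rwa [← hpre, hφ.integrableOn_comp_preimage φ.measurableEmbedding]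
  rw [← hφ.setIntegral_preimage_emb φ.measurableEmbedding, hpre, Measure.volume_eq_prod,
    ← setIntegral_prod_swap, setIntegral_prod]
  · simp only [Prod.swap_prod_mk, hφ_apply]
  · exact hint.swap

noncomputable def expSum {k : ℕ} (A : Finset (Fin k → ℤ)) (t : Fin k → ℝ) : ℂ :=
  ∑ v ∈ A, e (∑ i, (v i : ℝ) * t i)

noncomputable def fibreExpSum {k : ℕ} (A : Finset (Fin (k + 1) → ℤ)) (b : ℤ) (y : Fin k → ℝ) :
    ℂ :=
  ∑ v ∈ A.filter (fun v => v 0 = b), e (∑ i, (v i.succ : ℝ) * y i)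

@[fun_prop]
theorem continuous_expSum {k : ℕ} (A : Finset (Fin k → ℤ)) : Continuous (expSum A) := by
  unfold expSum; fun_prop

@[fun_prop]
theorem continuous_fibreExpSum {k : ℕ} (A : Finset (Fin (k + 1) → ℤ)) (b : ℤ) :
    Continuous (fibreExpSum A b) := by
  unfold fibreExpSum; fun_prop

theorem expSum_cons {k : ℕ} (A : Finset (Fin (k + 1) → ℤ)) (x : ℝ) (y : Fin k → ℝ) :
    expSum A (Fin.cons x y) = ∑ b ∈ A.image (· 0), fibreExpSum A b y * e (b * x) := by
  rw [expSum, ← Finset.sum_fiberwise_of_maps_to fun v hv => Finset.mem_image_of_mem (· 0) hv]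
  refine Finset.sum_congr rfl fun b _ => ?_
  rw [fibreExpSum, Finset.sum_mul]
  refine Finset.sum_congr rfl fun v hv => ?_
  rw [Fin.sum_univ_succ, e_add, (Finset.mem_filter.mp hv).2, mul_comm]
  simp

theorem integral_intervalIntegral_norm_ge_of_mps {Y : Type*} [MeasurableSpace Y] {μ : Measure Y}
    {C : ℝ} {n : ℕ} {a : Fin n → ℤ}
    (hMPS : ∀ w : Fin n → ℂ,
      (∫ t in (0 : ℝ)..1, ‖∑ j, w j * e ((a j : ℝ) * t)‖) ≥ C * ∑ j, ‖w j‖ / (j.1 + 1 : ℝ))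
    {u : Fin n → Y → ℂ} (hu : ∀ j, Integrable (u j) μ)
    (hint : Integrable (fun y => ∫ t in (0 : ℝ)..1, ‖∑ j, u j y * e ((a j : ℝ) * t)‖) μ) :
    ∫ y, (∫ t in (0 : ℝ)..1, ‖∑ j, u j y * e ((a j : ℝ) * t)‖) ∂μ ≥
      C * ∑ j, 1 / (j.1 + 1 : ℝ) * ∫ y, ‖u j y‖ ∂μ := by
  have hlower : Integrable (fun y => C * ∑ j, ‖u j y‖ / (j.1 + 1 : ℝ)) μ :=
    (integrable_finsetSum _ fun j _ => (hu j).norm.div_const _).const_mul C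
  calc ∫ y, (∫ t in (0 : ℝ)..1, ‖∑ j, u j y * e ((a j : ℝ) * t)‖) ∂μ
      ≥ ∫ y, C * ∑ j, ‖u j y‖ / (j.1 + 1 : ℝ) ∂μ :=
        integral_mono hlower hint fun y => hMPS fun j => u j y
    _ = C * ∑ j, 1 / (j.1 + 1 : ℝ) * ∫ y, ‖u j y‖ ∂μ := by
        rw [integral_const_mul, integral_finsetSum _ fun j _ => (hu j).norm.div_const _]
        simp only [integral_div, one_div, inv_mul_eq_div]

theorem littlewood_fibre_bound_general
    (C : ℝ)
    (hMPS : ∀ (n : ℕ) (a : Fin n → ℤ) (u : Fin n → ℂ), StrictMono a →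
      (∫ t in (0 : ℝ)..1, ‖∑ j, u j * e ((a j : ℝ) * t)‖) ≥
        C * ∑ j, ‖u j‖ / (j.1 + 1 : ℝ))
    (r' n : ℕ) (A : Finset (Fin (r' + 1) → ℤ))
    (a1 : Fin n → ℤ) (ha1 : StrictMono a1)
    (himg : A.image (fun v => v 0) = Finset.image a1 Finset.univ) :
    (∫ t in Set.Icc (0 : Fin (r' + 1) → ℝ) 1,
        ‖∑ v ∈ A, e (∑ i, (v i : ℝ) * t i)‖) ≥
      C * ∑ j : Fin n, (1 / (j.1 + 1 : ℝ)) *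
        ∫ t in Set.Icc (0 : Fin r' → ℝ) 1,
          ‖∑ v ∈ A.filter (fun v => v 0 = a1 j), e (∑ i, (v i.succ : ℝ) * t i)‖ := by
  have hsplit (x : ℝ) (y : Fin r' → ℝ) :
      expSum A (Fin.cons x y) = ∑ j, fibreExpSum A (a1 j) y * e (a1 j * x) := by
    rw [expSum_cons, himg, Finset.sum_image fun i _ j _ h => ha1.injective h]
  calc ∫ t in Icc 0 1, ‖expSum A t‖
      = ∫ y in Icc 0 1, ∫ x in Icc 0 1, ‖expSum A (Fin.cons x y)‖ :=
        setIntegral_Icc_fin_succ (continuous_expSum A).norm.integrableOn_Icc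
    _ = ∫ y in Icc 0 1, ∫ x in (0 : ℝ)..1, ‖∑ j, fibreExpSum A (a1 j) y * e (a1 j * x)‖ := by
        simp_rw [hsplit, integral_Icc_eq_integral_Ioc, intervalIntegral.integral_of_le zero_le_one]
    _ ≥ _ := integral_intervalIntegral_norm_ge_of_mps (hMPS n a1 · ha1)
        (fun j => (continuous_fibreExpSum A _).integrableOn_Icc)
        (by fun_prop : Continuous _).integrableOn_Icc

/-- Theorem 1.2: if `A ⊆ ℤ^r` (here `r = r'+1 ≥ 1`) has first-coordinate projection
`A_1 = {a_{1,1} < … < a_{1,n}}`, then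
`∫_{[0,1]^r} |∑_{a∈A} e(a·t)| dt ≥ C_MPS ∑_{j=1}^n (1/j) ∫_{[0,1]^{r-1}}
  |∑_{a* ∈ A_1^*(a_{1,j})} e(a*·t)| dt`,
where `C_MPS` is the constant from the McGehee–Pigno–Smith inequality. -/
theorem littlewood_fibre_bound
    (C : ℝ) (hC : 0 < C)
    (hMPS : ∀ (n : ℕ) (a : Fin n → ℤ) (u : Fin n → ℂ), StrictMono a →
      (∫ t in (0:ℝ)..1, ‖∑ j, u j * e ((a j : ℝ) * t)‖) ≥
        C * ∑ j, ‖u j‖ / (j.1 + 1 : ℝ))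
    (r' n : ℕ) (A : Finset (Fin (r' + 1) → ℤ))
    (a1 : Fin n → ℤ) (ha1 : StrictMono a1)
    (himg : A.image (fun v => v 0) = Finset.image a1 Finset.univ) :
    (∫ t in Set.Icc (0 : Fin (r' + 1) → ℝ) 1,
        ‖∑ v ∈ A, e (∑ i, (v i : ℝ) * t i)‖) ≥
      C * ∑ j : Fin n, (1 / (j.1 + 1 : ℝ)) *
        ∫ t in Set.Icc (0 : Fin r' → ℝ) 1,
          ‖∑ v ∈ A.filter (fun v => v 0 = a1 j), e (∑ i, (v i.succ : ℝ) * t i)‖ :=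
  littlewood_fibre_bound_general C hMPS r' n A a1 ha1 himg
end

section
/- Let M and N be integers with 2 ≤ M < N. Then (1/M^2) ∫_{1/(N+M)}^{1/M} (sin(πMt))^2 / |sin(πt)|^3 dt ≤ 2 log(1 + N/M). -/
open MeasureTheory Real

/-! Jordan's inequality `2t ≤ sin(πt)` on `[0, 1/2]` together with `sin² x ≤ x²` bounds the
integrand by `π² M² / (8t)`, whose integral over `[1/(N+M), 1/M]` is `π² M² / 8 · log(1 + N/M)`;
finally `π² / 8 ≤ 2`. -/

lemma two_mul_le_sin_pi_mul {t : ℝ} (ht₀ : 0 ≤ t) (ht : t ≤ 1 / 2) :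
    2 * t ≤ sin (π * t) := by
  calc 2 * t = 2 / π * (π * t) := by field_simp
    _ ≤ sin (π * t) := mul_le_sin (by positivity) (by nlinarith [pi_pos])

lemma sin_sq_div_abs_sin_pow_three_le (m : ℝ) {t : ℝ} (ht₀ : 0 < t) (ht : t ≤ 1 / 2) :
    sin (π * m * t) ^ 2 / |sin (π * t)| ^ 3 ≤ π ^ 2 * m ^ 2 / 8 * t⁻¹ := by
  have hsin : 2 * t ≤ |sin (π * t)| := (two_mul_le_sin_pi_mul ht₀.le ht).trans (le_abs_self _)
  calc sin (π * m * t) ^ 2 / |sin (π * t)| ^ 3 ≤ (π * m * t) ^ 2 / (2 * t) ^ 3 := by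
        gcongr ?_ / ?_
        · exact sin_sq_le_sq
        · gcongr
    _ = π ^ 2 * m ^ 2 / 8 * t⁻¹ := by field_simp; ring

lemma continuousOn_sin_sq_div_abs_sin_pow_three (m : ℝ) {a b : ℝ} (ha : 0 < a) (hb : b ≤ 1 / 2) :
    ContinuousOn (fun t ↦ sin (π * m * t) ^ 2 / |sin (π * t)| ^ 3) (Set.Icc a b) := by
  refine ContinuousOn.div (by fun_prop) (by fun_prop) fun t ht ↦ ?_
  have ht₀ : 0 < t := ha.trans_le ht.1
  have : 0 < sin (π * t) :=
    (mul_pos two_pos ht₀).trans_le (two_mul_le_sin_pi_mul ht₀.le (ht.2.trans hb))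
  positivity

lemma integral_sin_sq_div_abs_sin_pow_three_le (m : ℝ) {a b : ℝ} (ha : 0 < a) (hab : a ≤ b)
    (hb : b ≤ 1 / 2) :
    ∫ t in a..b, sin (π * m * t) ^ 2 / |sin (π * t)| ^ 3 ≤ π ^ 2 * m ^ 2 / 8 * log (b / a) := by
  have hpos : ∀ t ∈ Set.Icc a b, 0 < t := fun t ht ↦ ha.trans_le ht.1
  calc ∫ t in a..b, sin (π * m * t) ^ 2 / |sin (π * t)| ^ 3
      ≤ ∫ t in a..b, π ^ 2 * m ^ 2 / 8 * t⁻¹ := by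
        refine intervalIntegral.integral_mono_on hab
          ((continuousOn_sin_sq_div_abs_sin_pow_three m ha hb).intervalIntegrable_of_Icc hab)
          (ContinuousOn.intervalIntegrable_of_Icc hab
            (continuousOn_const.mul (continuousOn_inv₀.mono fun t ht ↦ (hpos t ht).ne')))
          fun t ht ↦ sin_sq_div_abs_sin_pow_three_le m (hpos t ht) (ht.2.trans hb)
    _ = π ^ 2 * m ^ 2 / 8 * log (b / a) := by
        rw [intervalIntegral.integral_const_mul, integral_inv_of_pos ha (ha.trans_le hab)]

/-- The middle-range estimate `I_2`: for integers `2 ≤ M < N`,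
`(1/M^2) ∫_{1/(N+M)}^{1/M} (sin(πMt))^2 / |sin(πt)|^3 dt ≤ 2 log(1 + N/M)`. -/
theorem middle_range_bound
    (M N : ℤ) (hM : 2 ≤ M) (hMN : M < N) :
    (1 / (M : ℝ) ^ 2) *
        ∫ t in (1 / ((N : ℝ) + (M : ℝ)))..(1 / (M : ℝ)),
          (Real.sin (Real.pi * (M : ℝ) * t)) ^ 2 / |Real.sin (Real.pi * t)| ^ 3 ≤
      2 * Real.log (1 + (N : ℝ) / (M : ℝ)) := by
  have hM' : (2 : ℝ) ≤ M := by exact_mod_cast hM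
  have hMN' : (M : ℝ) < N := by exact_mod_cast hMN
  have hM₀ : (0 : ℝ) < M := by linarith
  have hratio : 1 / (M : ℝ) / (1 / (N + M)) = 1 + N / M := by field_simp; ring
  have hlog : 0 ≤ log (1 + (N : ℝ) / M) :=
    log_nonneg (le_add_of_nonneg_right (div_nonneg (by linarith) hM₀.le))
  have hpi : π ^ 2 / 8 ≤ 2 := by nlinarith [pi_lt_d2, pi_pos]
  have hint := integral_sin_sq_div_abs_sin_pow_three_le (M : ℝ) (a := 1 / ((N : ℝ) + M))
    (b := 1 / (M : ℝ)) (one_div_pos.2 (by linarith))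
    (one_div_le_one_div_of_le hM₀ (by linarith)) (one_div_le_one_div_of_le two_pos hM')
  rw [hratio] at hint
  calc (1 / (M : ℝ) ^ 2) * ∫ t in (1 / ((N : ℝ) + M))..(1 / (M : ℝ)),
        sin (π * M * t) ^ 2 / |sin (π * t)| ^ 3
      ≤ (1 / (M : ℝ) ^ 2) * (π ^ 2 * M ^ 2 / 8 * log (1 + N / M)) := by gcongr
    _ = π ^ 2 / 8 * log (1 + N / M) := by field_simp
    _ ≤ 2 * log (1 + N / M) := by gcongr
end

section
/- Let I be a finite set of integers with |I| ≥ 8. Then there exist a positive integer q and an integer s such that |I|^{1/3}/8 ≤ |I(q;s)| ≤ q^{1/2}. -/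
/-!
Let `M(q)` be the size of the largest residue class of `I` modulo `q`. Then `M(1) = |I|`,
`|I| ≤ q M(q)` by pigeonhole, `M(q) ≤ 2 M(2q)` because a class mod `q` splits into two classes
mod `2q`, and `M(q) ≤ 1` once `q` exceeds the diameter of `I`. Take the least `j` with
`M(2^j)² ≤ 2^j` and `q = 2^j`. If `j > 0`, minimality and doubling give `q ≤ 8 M(q)²`, hence
`|I| ≤ q M(q) ≤ 8 M(q)³`; if `j = 0` then `|I| = M(1) ≤ 1`.
-/

open Filter

namespace Int.ModEq

theorem modEq_two_mul_or_modEq_add {n a b : ℤ} (h : a ≡ b [ZMOD n]) :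
    a ≡ b [ZMOD 2 * n] ∨ a ≡ b + n [ZMOD 2 * n] := by
  obtain ⟨m, hm⟩ := Int.modEq_iff_dvd.mp h.symm
  rcases Int.even_or_odd m with ⟨t, rfl⟩ | ⟨t, rfl⟩
  · exact Or.inl (Int.modEq_iff_dvd.mpr ⟨t, by linarith⟩).symm
  · exact Or.inr (Int.modEq_iff_dvd.mpr ⟨t, by linarith⟩).symm

end Int.ModEq

namespace Finset

variable (I : Finset ℤ) (q : ℕ)

def residueClass (s : ℤ) : Finset ℤ :=
  I.filter fun k => k ≡ s [ZMOD (q : ℤ)]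

def maxResidueClassCard : ℕ :=
  I.sup fun s => #(I.residueClass q s)

variable {I q}

theorem residueClass_congr {s t : ℤ} (h : s ≡ t [ZMOD q]) :
    I.residueClass q s = I.residueClass q t :=
  filter_congr fun _ _ => ⟨fun hk => hk.trans h, fun hk => hk.trans h.symm⟩

theorem card_residueClass_le_maxResidueClassCard (s : ℤ) :
    #(I.residueClass q s) ≤ I.maxResidueClassCard q := by
  obtain h | ⟨k, hk⟩ := (I.residueClass q s).eq_empty_or_nonempty
  · simp [h]
  · obtain ⟨hkI, hks⟩ := mem_filter.mp hk
    rw [residueClass_congr hks.symm]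
    exact le_sup (f := fun s => #(I.residueClass q s)) hkI

variable (I q)

theorem exists_card_residueClass_eq_maxResidueClassCard :
    ∃ s, #(I.residueClass q s) = I.maxResidueClassCard q := by
  obtain rfl | hI := I.eq_empty_or_nonempty
  · exact ⟨0, by simp [residueClass, maxResidueClassCard]⟩
  · obtain ⟨s, -, hs⟩ := exists_mem_eq_sup I hI fun s => #(I.residueClass q s)
    exact ⟨s, hs.symm⟩

theorem maxResidueClassCard_one : I.maxResidueClassCard 1 = #I := by
  obtain ⟨s, hs⟩ := exists_card_residueClass_eq_maxResidueClassCard I 1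
  rw [← hs, residueClass, Nat.cast_one, filter_true_of_mem fun _ _ => Int.modEq_one]

theorem card_le_mul_maxResidueClassCard (hq : 0 < q) : #I ≤ q * I.maxResidueClassCard q := by
  have hq' : (0 : ℤ) < q := by exact_mod_cast hq
  have hmaps : ∀ k ∈ I, k % (q : ℤ) ∈ Ico 0 (q : ℤ) := fun k _ =>
    mem_Ico.mpr ⟨Int.emod_nonneg k hq'.ne', Int.emod_lt_of_pos k hq'⟩
  have hfiber : ∀ r ∈ Ico 0 (q : ℤ), #{k ∈ I | k % (q : ℤ) = r} ≤ I.maxResidueClassCard q := by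
    intro r hr
    obtain ⟨hr0, hrq⟩ := mem_Ico.mp hr
    have hrr : r % (q : ℤ) = r := Int.emod_eq_of_lt hr0 hrq
    have : {k ∈ I | k % (q : ℤ) = r} = I.residueClass q r := by
      simp only [residueClass, Int.ModEq, hrr]
    rw [this]
    exact card_residueClass_le_maxResidueClassCard r
  simpa [mul_comm] using card_le_mul_card_image_of_maps_to hmaps _ hfiber

theorem maxResidueClassCard_le_two_mul :
    I.maxResidueClassCard q ≤ 2 * I.maxResidueClassCard (2 * q) := by
  obtain ⟨s, hs⟩ := exists_card_residueClass_eq_maxResidueClassCard I q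
  have hsplit : I.residueClass q s ⊆ I.residueClass (2 * q) s ∪ I.residueClass (2 * q) (s + q) := by
    intro k hk
    obtain ⟨hkI, hks⟩ := mem_filter.mp hk
    rcases hks.modEq_two_mul_or_modEq_add with h | h
    · exact mem_union_left _ (mem_filter.mpr ⟨hkI, by push_cast; exact h⟩)
    · exact mem_union_right _ (mem_filter.mpr ⟨hkI, by push_cast; exact h⟩)
  calc I.maxResidueClassCard q = #(I.residueClass q s) := hs.symm
    _ ≤ #(I.residueClass (2 * q) s) + #(I.residueClass (2 * q) (s + q)) :=
      (card_le_card hsplit).trans (card_union_le _ _)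
    _ ≤ 2 * I.maxResidueClassCard (2 * q) := by
      have := card_residueClass_le_maxResidueClassCard (I := I) (q := 2 * q) s
      have := card_residueClass_le_maxResidueClassCard (I := I) (q := 2 * q) (s + q)
      omega

variable {q}

theorem maxResidueClassCard_le_one_of_natAbs_sub_lt (h : ∀ a ∈ I, ∀ b ∈ I, (a - b).natAbs < q) :
    I.maxResidueClassCard q ≤ 1 := by
  obtain ⟨s, hs⟩ := exists_card_residueClass_eq_maxResidueClassCard I q
  rw [← hs, card_le_one]
  intro a ha b hb
  obtain ⟨haI, has⟩ := mem_filter.mp ha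
  obtain ⟨hbI, hbs⟩ := mem_filter.mp hb
  have hdvd : (q : ℤ) ∣ a - b := Int.modEq_iff_dvd.mp (has.trans hbs.symm).symm
  have := Int.eq_zero_of_dvd_of_natAbs_lt_natAbs hdvd (by simpa using h a haI b hbI)
  omega

theorem eventually_maxResidueClassCard_le_one : ∀ᶠ q in atTop, I.maxResidueClassCard q ≤ 1 := by
  filter_upwards [eventually_gt_atTop (2 * I.sup Int.natAbs)] with q hq
  refine maxResidueClassCard_le_one_of_natAbs_sub_lt I fun a ha b hb => ?_
  have ha' : a.natAbs ≤ I.sup Int.natAbs := le_sup ha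
  have hb' : b.natAbs ≤ I.sup Int.natAbs := le_sup hb
  omega

theorem exists_two_pow_maxResidueClassCard_sq_le :
    ∃ j, I.maxResidueClassCard (2 ^ j) ^ 2 ≤ 2 ^ j := by
  obtain ⟨j, hj⟩ := ((tendsto_pow_atTop_atTop_of_one_lt one_lt_two).eventually
    (eventually_maxResidueClassCard_le_one I)).exists
  exact ⟨j, (Nat.pow_le_one_iff two_ne_zero |>.mpr hj).trans Nat.one_le_two_pow⟩

theorem exists_two_pow_good_modulus :
    ∃ j, I.maxResidueClassCard (2 ^ j) ^ 2 ≤ 2 ^ j ∧ #I ≤ 8 * I.maxResidueClassCard (2 ^ j) ^ 3 := by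
  have hex := exists_two_pow_maxResidueClassCard_sq_le I
  refine ⟨Nat.find hex, Nat.find_spec hex, ?_⟩
  rcases hj : Nat.find hex with _ | j
  · have h := Nat.find_spec hex
    rw [hj, pow_zero, maxResidueClassCard_one] at h
    rw [pow_zero, maxResidueClassCard_one]
    nlinarith
  · set m := I.maxResidueClassCard (2 ^ (j + 1))
    have hprev : 2 ^ j < I.maxResidueClassCard (2 ^ j) ^ 2 :=
      not_le.mp (Nat.find_min hex (by omega))
    have hdouble : I.maxResidueClassCard (2 ^ j) ≤ 2 * m := by
      simpa [m, pow_succ, mul_comm] using maxResidueClassCard_le_two_mul I (2 ^ j)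
    have hq : 2 ^ (j + 1) ≤ 8 * m ^ 2 := by
      have := Nat.pow_le_pow_left hdouble 2
      rw [pow_succ]
      nlinarith
    calc #I ≤ 2 ^ (j + 1) * m := card_le_mul_maxResidueClassCard I _ (by positivity)
      _ ≤ 8 * m ^ 2 * m := Nat.mul_le_mul_right m hq
      _ = 8 * m ^ 3 := by ring

end Finset

theorem good_modulus_general (I : Finset ℤ) :
    ∃ (q : ℕ) (s : ℤ), 0 < q ∧
      (I.card : ℝ) ^ ((1 : ℝ) / 3) / 8 ≤
        ((I.filter (fun k => k ≡ s [ZMOD (q : ℤ)])).card : ℝ) ∧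
      ((I.filter (fun k => k ≡ s [ZMOD (q : ℤ)])).card : ℝ) ≤ (q : ℝ) ^ ((1 : ℝ) / 2) := by
  obtain ⟨j, hsq, hcube⟩ := I.exists_two_pow_good_modulus
  obtain ⟨s, hs⟩ := I.exists_card_residueClass_eq_maxResidueClassCard (2 ^ j)
  set m := I.maxResidueClassCard (2 ^ j)
  have hm : ((I.filter fun k => k ≡ s [ZMOD ((2 ^ j : ℕ) : ℤ)]).card : ℝ) = m := by
    exact_mod_cast hs
  refine ⟨2 ^ j, s, by positivity, ?_, ?_⟩ <;> rw [hm]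
  · have hroot : (I.card : ℝ) ^ ((1 : ℝ) / 3) ≤ 2 * m := by
      rw [one_div, Real.rpow_inv_le_iff_of_pos (by positivity) (by positivity) three_pos,
        Real.rpow_ofNat]
      exact_mod_cast (by linarith : I.card ≤ (2 * m) ^ 3)
    linarith [m.cast_nonneg (α := ℝ)]
  · rw [← Real.sqrt_eq_rpow, Real.le_sqrt (by positivity) (by positivity)]
    exact_mod_cast hsq

/-- Lemma 3.6 (good modulus): if `I` is a finite set of integers with `|I| ≥ 8`, then there
are a positive integer `q` and an integer `s` such that
`|I|^{1/3}/8 ≤ |I(q;s)| ≤ q^{1/2}`, where `I(q;s) = {k ∈ I : k ≡ s (mod q)}`. -/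
theorem good_modulus (I : Finset ℤ) (hI : 8 ≤ I.card) :
    ∃ (q : ℕ) (s : ℤ), 0 < q ∧
      (I.card : ℝ) ^ ((1 : ℝ) / 3) / 8 ≤
        ((I.filter (fun k => k ≡ s [ZMOD (q : ℤ)])).card : ℝ) ∧
      ((I.filter (fun k => k ≡ s [ZMOD (q : ℤ)])).card : ℝ) ≤ (q : ℝ) ^ ((1 : ℝ) / 2) :=
  good_modulus_general I
end
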